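/- arXiv:2103.04886 — 3 statements merged into one kernel-verified Lean document; each statement's English description precedes it below -/
import Mathlib

section
/- Let Att : ℝ^{d×n} → ℝ^{d×m} be a Lipschitz continuous map (with respect to the Frobenius norm on both domain and codomain) with Lipschitz constant L_F(Att). Fix matrices W_1, …, W_h (each mapping ℝ^{d_I×n} inputs to ℝ^{d×n}, i.e. W_k ∈ ℝ^{d×d_I}) and W_O ∈ ℝ^{d_O×dh}, and define the multi-head attention MultAtt : ℝ^{d_I×n} → ℝ^{d_O×m} by MultAtt(X) = W_O · (Att(W_1 X) ‖ Att(W_2 X) ‖ … ‖ Att(W_h X)), where ‖ denotes row-wise (vertical) concatenation of the h output matrices into a (dh)×m matrix. Then MultAtt is Lipschitz continuous with respect to the Frobenius norm and L_F(MultAtt) ≤ L_F(Att) · ‖W_O‖_* · √(Σ_{k=1}^h ‖W_k‖_*²), i.e. for all X, Y ∈ ℝ^{d_I×n}, ‖MultAtt(X) − MultAtt(Y)‖_F ≤ L_F(Att) · ‖W_O‖_* · √(Σ_{k=1}^h ‖W_k‖_*²) · ‖X − Y‖_F. -/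
open scoped BigOperators

/-- Frobenius norm of a real matrix. -/
noncomputable def frobNorm {α β : Type*} [Fintype α] [Fintype β] (M : Matrix α β ℝ) : ℝ :=
  Real.sqrt (∑ i, ∑ j, (M i j) ^ 2)

/-- Row-wise softmax of a real matrix. -/
noncomputable def softmaxM {α β : Type*} [Fintype α] [Fintype β] (M : Matrix α β ℝ) :
    Matrix α β ℝ :=
  Matrix.of fun i j => Real.exp (M i j) / ∑ k, Real.exp (M i k)

/-- The `(∞,2)`-norm of a matrix: the maximum Euclidean norm of its rows. -/
noncomputable def normInf2 {α β : Type*} [Fintype α] [Fintype β] (M : Matrix α β ℝ) : ℝ :=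
  ⨆ i, Real.sqrt (∑ j, (M i j) ^ 2)

/-- The `(2,∞)`-norm of a matrix: the ℓ2 norm of the vector of row-wise maxima (in abs. value). -/
noncomputable def norm2Inf {α β : Type*} [Fintype α] [Fintype β] (M : Matrix α β ℝ) : ℝ :=
  Real.sqrt (∑ i, (⨆ j, |M i j|) ^ 2)

/-- Spectral norm (largest singular value / ℓ2→ℓ2 operator norm) of a real matrix. -/
noncomputable def specNorm {α β : Type*} [Fintype α] [Fintype β] [DecidableEq β]
    (M : Matrix α β ℝ) : ℝ :=
  ‖LinearMap.toContinuousLinearMap (Matrix.toEuclideanLin M)‖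

/-!
Each head is Lipschitz with constant `L_F(Att) ‖W_k‖_*` because `‖W Z‖_F ≤ ‖W‖_* ‖Z‖_F`
(apply the operator bound column by column). The squared Frobenius norm of the concatenation
is the sum of the squared norms of the heads, which gives the factor `√(∑ₖ ‖W_k‖_*²)`, and
multiplying by `W_O` costs one more factor `‖W_O‖_*`. If `L < 0` the hypothesis forces the
domain `ℝ^{d×n}` to be a single point, so `d = 0` or `n = 0` and both sides vanish.
-/

open scoped Matrix

def vstack {ι α β R : Type*} (A : ι → Matrix α β R) : Matrix (ι × α) β R :=
  Matrix.of fun ki j => A ki.1 ki.2 j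

section MatrixNorms

variable {α β γ : Type*} [Fintype α] [Fintype β] [Fintype γ]

lemma frobNorm_nonneg (M : Matrix α β ℝ) : 0 ≤ frobNorm M :=
  Real.sqrt_nonneg _

lemma frobNorm_sq (M : Matrix α β ℝ) : frobNorm M ^ 2 = ∑ i, ∑ j, M i j ^ 2 :=
  Real.sq_sqrt (by positivity)

lemma frobNorm_eq_zero_iff {M : Matrix α β ℝ} : frobNorm M = 0 ↔ M = 0 := by
  have hrow (i : α) : 0 ≤ ∑ j, M i j ^ 2 := by positivity
  rw [frobNorm, Real.sqrt_eq_zero (Finset.sum_nonneg fun i _ => hrow i),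
    Finset.sum_eq_zero_iff_of_nonneg fun i _ => hrow i, ← Matrix.ext_iff]
  simp [Finset.sum_eq_zero_iff_of_nonneg, sq_nonneg]

lemma specNorm_nonneg [DecidableEq β] (M : Matrix α β ℝ) : 0 ≤ specNorm M :=
  norm_nonneg (LinearMap.toContinuousLinearMap (Matrix.toEuclideanLin M))

lemma sum_sq_mulVec_le [DecidableEq β] (M : Matrix α β ℝ) (v : β → ℝ) :
    ∑ i, (M *ᵥ v) i ^ 2 ≤ specNorm M ^ 2 * ∑ j, v j ^ 2 := by
  have h := (LinearMap.toContinuousLinearMap (Matrix.toEuclideanLin M)).le_opNorm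
    (WithLp.toLp 2 v)
  have hsq := pow_le_pow_left₀ (norm_nonneg _) h 2
  simpa [mul_pow, EuclideanSpace.real_norm_sq_eq, specNorm] using hsq

lemma frobNorm_mul_le [DecidableEq β] (M : Matrix α β ℝ) (N : Matrix β γ ℝ) :
    frobNorm (M * N) ≤ specNorm M * frobNorm N := by
  refine (pow_le_pow_iff_left₀ (frobNorm_nonneg _)
    (mul_nonneg (specNorm_nonneg M) (frobNorm_nonneg N)) two_ne_zero).mp ?_
  calc frobNorm (M * N) ^ 2 = ∑ j, ∑ i, (M *ᵥ fun k => N k j) i ^ 2 := by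
        rw [frobNorm_sq, Finset.sum_comm]; rfl
    _ ≤ ∑ j, specNorm M ^ 2 * ∑ k, N k j ^ 2 :=
        Finset.sum_le_sum fun j _ => sum_sq_mulVec_le M _
    _ = (specNorm M * frobNorm N) ^ 2 := by
        rw [mul_pow, frobNorm_sq, ← Finset.mul_sum, Finset.sum_comm]

lemma frobNorm_vstack_sq {ι : Type*} [Fintype ι] (A : ι → Matrix α β ℝ) :
    frobNorm (vstack A) ^ 2 = ∑ k, frobNorm (A k) ^ 2 := by
  simp only [frobNorm_sq, Fintype.sum_prod_type]
  rfl

lemma frobNorm_vstack_le {ι : Type*} [Fintype ι] {A : ι → Matrix α β ℝ} {L : ℝ} {c : ι → ℝ}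
    (hc : ∀ k, 0 ≤ c k) (hA : ∀ k, frobNorm (A k) ≤ L * c k) :
    frobNorm (vstack A) ≤ L * Real.sqrt (∑ k, c k ^ 2) := by
  rcases le_or_gt 0 L with hL | hL
  · refine (pow_le_pow_iff_left₀ (frobNorm_nonneg _) (by positivity) two_ne_zero).mp ?_
    rw [frobNorm_vstack_sq, mul_pow, Real.sq_sqrt (by positivity), Finset.mul_sum]
    gcongr with k
    rw [← mul_pow]
    exact pow_le_pow_left₀ (frobNorm_nonneg _) (hA k) 2
  · have hc0 (k : ι) : c k = 0 := le_antisymm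
      (nonpos_of_mul_nonneg_right ((frobNorm_nonneg _).trans (hA k)) hL) (hc k)
    have hA0 (k : ι) : frobNorm (A k) = 0 :=
      le_antisymm ((hA k).trans_eq (by rw [hc0, mul_zero])) (frobNorm_nonneg _)
    have hstack : frobNorm (vstack A) = 0 := by simpa [hA0] using frobNorm_vstack_sq A
    simp [hstack, hc0]

end MatrixNorms

section Lipschitz

variable {α β γ δ ι : Type*} [Fintype α] [Fintype β] [Fintype γ] [Fintype δ] [Fintype ι]

lemma subsingleton_of_frobNorm_lipschitz_of_neg (f : Matrix α β ℝ → Matrix γ δ ℝ) {L : ℝ}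
    (hL : L < 0) (hf : ∀ A B, frobNorm (f A - f B) ≤ L * frobNorm (A - B)) :
    Subsingleton (Matrix α β ℝ) :=
  ⟨fun A B => sub_eq_zero.mp <| frobNorm_eq_zero_iff.mp <| le_antisymm
    (nonpos_of_mul_nonneg_right ((frobNorm_nonneg _).trans (hf A B)) hL)
    (frobNorm_nonneg _)⟩

lemma specNorm_mul_frobNorm_eq_zero_of_subsingleton [DecidableEq ι]
    (h : Subsingleton (Matrix α β ℝ)) (W : Matrix α ι ℝ) (Z : Matrix ι β ℝ) :
    specNorm W * frobNorm Z = 0 := by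
  have hempty : IsEmpty α ∨ IsEmpty β := by
    by_contra! hne
    obtain ⟨⟨i⟩, ⟨j⟩⟩ := hne
    simpa using congrFun₂ (Subsingleton.elim (Matrix.of fun _ _ => (1 : ℝ)) 0) i j
  rcases hempty with hα | hβ
  · rw [Subsingleton.elim W 0]
    simp [specNorm]
  · rw [Subsingleton.elim Z 0, frobNorm_eq_zero_iff.mpr rfl, mul_zero]

lemma frobNorm_sub_le_of_lipschitz_of_mul [DecidableEq ι] (f : Matrix α β ℝ → Matrix γ δ ℝ)
    {L : ℝ} (hf : ∀ A B, frobNorm (f A - f B) ≤ L * frobNorm (A - B))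
    (W : Matrix α ι ℝ) (X Y : Matrix ι β ℝ) :
    frobNorm (f (W * X) - f (W * Y)) ≤ L * (specNorm W * frobNorm (X - Y)) := by
  rcases le_or_gt 0 L with hL | hL
  · calc frobNorm (f (W * X) - f (W * Y)) ≤ L * frobNorm (W * (X - Y)) := by
          rw [Matrix.mul_sub]; exact hf _ _
      _ ≤ L * (specNorm W * frobNorm (X - Y)) := by gcongr; exact frobNorm_mul_le W _
  · have hsub := subsingleton_of_frobNorm_lipschitz_of_neg f hL hf
    rw [Subsingleton.elim (W * X) (W * Y), sub_self, frobNorm_eq_zero_iff.mpr rfl,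
      specNorm_mul_frobNorm_eq_zero_of_subsingleton hsub, mul_zero]

end Lipschitz

/-- If each attention head `Att` is Lipschitz continuous with constant `L`
(for the Frobenius norm), then multi-head attention
`MultAtt X = W_O ⬝ (Att (W₁ X) ‖ ⋯ ‖ Att (W_h X))` is Lipschitz continuous with constant
`L ⬝ ‖W_O‖_* ⬝ √(∑ₖ ‖Wₖ‖_*²)`.  The row-wise concatenation of the `h` heads (each `d × m`)
into a `(h⬝d) × m` matrix is realized by indexing rows by `Fin h × Fin d`. -/
theorem multihead_attention_lipschitz
    {dI d dO n m h : ℕ}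
    (Att : Matrix (Fin d) (Fin n) ℝ → Matrix (Fin d) (Fin m) ℝ)
    (L : ℝ)
    (hAtt : ∀ X Y, frobNorm (Att X - Att Y) ≤ L * frobNorm (X - Y))
    (W : Fin h → Matrix (Fin d) (Fin dI) ℝ)
    (WO : Matrix (Fin dO) (Fin h × Fin d) ℝ)
    (MultAtt : Matrix (Fin dI) (Fin n) ℝ → Matrix (Fin dO) (Fin m) ℝ)
    (hMult : ∀ X, MultAtt X =
      WO * Matrix.of (fun (ki : Fin h × Fin d) (j : Fin m) => Att (W ki.1 * X) ki.2 j)) :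
    ∀ X Y : Matrix (Fin dI) (Fin n) ℝ,
      frobNorm (MultAtt X - MultAtt Y) ≤
        L * specNorm WO * Real.sqrt (∑ k, specNorm (W k) ^ 2) * frobNorm (X - Y) := by
  intro X Y
  set t := frobNorm (X - Y)
  have hdiff : MultAtt X - MultAtt Y =
      WO * vstack fun k => Att (W k * X) - Att (W k * Y) := by
    rw [hMult, hMult, ← Matrix.mul_sub]
    rfl
  have hheads (k : Fin h) :
      frobNorm (Att (W k * X) - Att (W k * Y)) ≤ L * (specNorm (W k) * t) :=
    frobNorm_sub_le_of_lipschitz_of_mul Att hAtt (W k) X Y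
  have hstack := frobNorm_vstack_le (fun k => mul_nonneg (specNorm_nonneg (W k))
    (frobNorm_nonneg (X - Y))) hheads
  calc frobNorm (MultAtt X - MultAtt Y)
      ≤ specNorm WO * frobNorm (vstack fun k => Att (W k * X) - Att (W k * Y)) := by
        rw [hdiff]; exact frobNorm_mul_le WO _
    _ ≤ specNorm WO * (L * Real.sqrt (∑ k, (specNorm (W k) * t) ^ 2)) :=
        mul_le_mul_of_nonneg_left hstack (specNorm_nonneg WO)
    _ = L * specNorm WO * Real.sqrt (∑ k, specNorm (W k) ^ 2) * t := by
        simp_rw [mul_pow, ← Finset.sum_mul]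
        rw [Real.sqrt_mul' _ (sq_nonneg t), Real.sqrt_sq (frobNorm_nonneg _)]
        ring
end

section
/- Let g : ℝ^{d×n} → ℝ^{m×n} be differentiable at X ∈ ℝ^{d×n}, and let Att(X) = X · softmax(g(X))ᵀ ∈ ℝ^{d×m}. Suppose C ≥ 0 is such that for every H ∈ ℝ^{d×n}, ‖Dg_X(H)‖_{(2,∞)} ≤ C · ‖H‖_F, where Dg_X denotes the Fréchet derivative of g at X. Then Att is differentiable at X and for every H ∈ ℝ^{d×n}, ‖DAtt_X(H)‖_F ≤ (‖softmax(g(X))‖_F + √2 · ‖Xᵀ‖_{(∞,2)} · C) · ‖H‖_F. -/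
open scoped BigOperators Matrix

attribute [local instance]
  Matrix.frobeniusSeminormedAddCommGroup Matrix.frobeniusNormedAddCommGroup
  Matrix.frobeniusNormedSpace

/-!
By the product and chain rules, `DAtt_X(H) = H Sᵀ + X (Dsoftmax_{g X} (Dg_X H))ᵀ` with
`S = softmax (g X)`, and `‖H Sᵀ‖_F ≤ ‖S‖_F ‖H‖_F`. Row `i` of `Dsoftmax_A E` is `s ⊙ (e - ⟨s, e⟩)`,
where `s` is the probability vector `softmax (A i)` and `e = E i`. Weighted Cauchy–Schwarz and
"variance ≤ second moment" give `∑ j, s j |e j - ⟨s, e⟩| ≤ max_j |e j|`, so the rows of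
`D = Dsoftmax (Dg_X H)` have `ℓ¹`-norms at most the row maxima of `Dg_X H`. The triangle inequality
in each row of `D Xᵀ` then gives `‖X Dᵀ‖_F ≤ ‖Xᵀ‖_{(∞,2)} ‖Dg_X H‖_{(2,∞)}`, i.e. the bound with
`1` in place of `√2`.
-/

open Finset Real

section MatrixCalculus

variable {𝕜 : Type*} [RCLike 𝕜] {l m n : Type*} [Fintype l] [Fintype m] [Fintype n]

noncomputable def matrixMulCLM : Matrix l m 𝕜 →L[𝕜] Matrix m n 𝕜 →L[𝕜] Matrix l n 𝕜 :=
  (mulLinearMap 𝕜).mkContinuous₂ 1 fun A B => by simpa using Matrix.frobenius_norm_mul A B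

noncomputable def transposeCLM : Matrix m n 𝕜 →L[𝕜] Matrix n m 𝕜 :=
  (Matrix.transposeLinearEquiv m n 𝕜 𝕜).toLinearMap.toContinuousLinearMap

noncomputable def rowCLM (i : m) : Matrix m n 𝕜 →L[𝕜] n → 𝕜 :=
  (LinearMap.proj i : (m → n → 𝕜) →ₗ[𝕜] n → 𝕜).toContinuousLinearMap

variable {E : Type*} [NormedAddCommGroup E] [NormedSpace 𝕜 E] {x : E}

theorem hasFDerivAt_matrix_iff_row {f : E → Matrix m n 𝕜} {f' : E →L[𝕜] Matrix m n 𝕜} :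
    HasFDerivAt f f' x ↔ ∀ i, HasFDerivAt (fun y => f y i) ((rowCLM i).comp f') x := by
  -- the identity from the Frobenius norm to the sup norm of `m → n → 𝕜`
  let e : Matrix m n 𝕜 ≃L[𝕜] (m → n → 𝕜) :=
    (LinearEquiv.refl 𝕜 (Matrix m n 𝕜) : Matrix m n 𝕜 ≃ₗ[𝕜] (m → n → 𝕜)).toContinuousLinearEquiv
  exact (e.comp_hasFDerivAt_iff (f := f) (f' := f')).symm.trans hasFDerivAt_pi'

theorem HasFDerivAt.matrix_mul {f : E → Matrix l m 𝕜} {g : E → Matrix m n 𝕜}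
    {f' : E →L[𝕜] Matrix l m 𝕜} {g' : E →L[𝕜] Matrix m n 𝕜}
    (hf : HasFDerivAt f f' x) (hg : HasFDerivAt g g' x) :
    HasFDerivAt (fun y => f y * g y)
      (matrixMulCLM.precompR E (f x) g' + matrixMulCLM.precompL E f' (g x)) x :=
  matrixMulCLM.hasFDerivAt_of_bilinear hf hg

theorem HasFDerivAt.matrix_transpose {f : E → Matrix m n 𝕜} {f' : E →L[𝕜] Matrix m n 𝕜}
    (hf : HasFDerivAt f f' x) :
    HasFDerivAt (fun y => (f y)ᵀ) (transposeCLM.comp f') x :=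
  (transposeCLM (𝕜 := 𝕜) (m := m) (n := n)).hasFDerivAt.comp x hf

end MatrixCalculus

section Softmax

variable {m n : Type*} [Fintype m] [Fintype n]

noncomputable def softmaxVec (v : n → ℝ) (j : n) : ℝ :=
  exp (v j) / ∑ k, exp (v k)

theorem softmaxVec_nonneg (v : n → ℝ) (j : n) : 0 ≤ softmaxVec v j :=
  div_nonneg (exp_pos _).le (sum_nonneg fun _ _ => (exp_pos _).le)

theorem sum_softmaxVec_le_one (v : n → ℝ) : ∑ j, softmaxVec v j ≤ 1 := by
  simp only [softmaxVec, ← sum_div]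
  exact div_le_one_of_le₀ le_rfl (sum_nonneg fun _ _ => (exp_pos _).le)

/-- The Jacobian `diag s - s sᵀ` of the softmax at `v`, where `s = softmaxVec v`. -/
noncomputable def softmaxVecFDeriv (v : n → ℝ) : (n → ℝ) →L[ℝ] n → ℝ :=
  .pi fun j => softmaxVec v j • (.proj j - ∑ k, softmaxVec v k • .proj k)

@[simp] theorem softmaxVecFDeriv_apply (v e : n → ℝ) (j : n) :
    softmaxVecFDeriv v e j = softmaxVec v j * (e j - ∑ k, softmaxVec v k * e k) := by
  simp [softmaxVecFDeriv]

theorem hasFDerivAt_softmaxVec (v : n → ℝ) :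
    HasFDerivAt softmaxVec (softmaxVecFDeriv v) v := by
  refine hasFDerivAt_pi.2 fun j => ?_
  have hZ : ∑ k, exp (v k) ≠ 0 := (sum_pos (fun k _ => exp_pos _) ⟨j, mem_univ j⟩).ne'
  have hnum := (hasFDerivAt_apply j v).exp
  have hden := HasFDerivAt.fun_sum (u := univ) fun k _ => (hasFDerivAt_apply k v).exp
  refine (hnum.mul ((hasDerivAt_inv hZ).comp_hasFDerivAt v hden)).congr_fderiv ?_
  ext e
  simp [softmaxVec, div_mul_eq_mul_div, ← sum_div]
  field_simp
  ring

noncomputable def softmaxFDeriv (A : Matrix m n ℝ) : Matrix m n ℝ →L[ℝ] Matrix m n ℝ :=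
  (LinearMap.pi fun i => (softmaxVecFDeriv (A i)).toLinearMap ∘ₗ LinearMap.proj i :
    Matrix m n ℝ →ₗ[ℝ] Matrix m n ℝ).toContinuousLinearMap

theorem hasFDerivAt_softmaxM (A : Matrix m n ℝ) : HasFDerivAt softmaxM (softmaxFDeriv A) A :=
  hasFDerivAt_matrix_iff_row.2 fun i => by
    have h := (hasFDerivAt_softmaxVec (A i)).comp A (rowCLM (𝕜 := ℝ) (n := n) i).hasFDerivAt
    exact h.congr_fderiv (ContinuousLinearMap.ext fun _ => rfl)

end Softmax

theorem sum_mul_sub_sq_le_sum_mul_sq {ι : Type*} [Fintype ι] {s : ι → ℝ} (x : ι → ℝ)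
    (hs1 : ∑ j, s j ≤ 2) :
    ∑ j, s j * (x j - ∑ k, s k * x k) ^ 2 ≤ ∑ j, s j * x j ^ 2 := by
  set μ := ∑ k, s k * x k with hμ
  have expand : ∑ j, s j * (x j - μ) ^ 2
      = ∑ j, s j * x j ^ 2 - 2 * μ * ∑ j, s j * x j + μ ^ 2 * ∑ j, s j := by
    simp only [mul_sum, ← sum_sub_distrib, ← sum_add_distrib]
    exact sum_congr rfl fun j _ => by ring
  rw [expand, ← hμ]
  nlinarith [sq_nonneg μ]

theorem sum_mul_abs_sub_sum_mul_le {ι : Type*} [Fintype ι] {s x : ι → ℝ} {M : ℝ}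
    (hs : ∀ j, 0 ≤ s j) (hs1 : ∑ j, s j ≤ 1) (hx : ∀ j, |x j| ≤ M) (hM : 0 ≤ M) :
    ∑ j, s j * |x j - ∑ k, s k * x k| ≤ M := by
  set μ := ∑ k, s k * x k
  have hcs : (∑ j, s j * |x j - μ|) ^ 2 ≤ (∑ j, s j) * ∑ j, s j * (x j - μ) ^ 2 :=
    sum_sq_le_sum_mul_sum_of_sq_le_mul _ (fun j _ => hs j)
      (fun j _ => mul_nonneg (hs j) (sq_nonneg _))
      fun j _ => le_of_eq (by rw [mul_pow, sq_abs]; ring)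
  have hmom : ∑ j, s j * x j ^ 2 ≤ M ^ 2 := calc
    ∑ j, s j * x j ^ 2 ≤ ∑ j, s j * M ^ 2 := sum_le_sum fun j _ => by
      rw [← sq_abs]
      exact mul_le_mul_of_nonneg_left (pow_le_pow_left₀ (abs_nonneg _) (hx j) 2) (hs j)
    _ = (∑ j, s j) * M ^ 2 := (sum_mul ..).symm
    _ ≤ M ^ 2 := mul_le_of_le_one_left (sq_nonneg M) hs1
  refine le_of_pow_le_pow_left₀ two_ne_zero hM ?_
  calc (∑ j, s j * |x j - μ|) ^ 2 ≤ (∑ j, s j) * ∑ j, s j * (x j - μ) ^ 2 := hcs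
    _ ≤ 1 * ∑ j, s j * x j ^ 2 :=
      mul_le_mul hs1 (sum_mul_sub_sq_le_sum_mul_sq x (by linarith))
        (sum_nonneg fun j _ => mul_nonneg (hs j) (sq_nonneg _)) zero_le_one
    _ ≤ M ^ 2 := by rw [one_mul]; exact hmom

section Bounds

variable {l m n : Type*} [Fintype l] [Fintype m] [Fintype n]

theorem sum_abs_softmaxVecFDeriv_le (v e : n → ℝ) :
    ∑ j, |softmaxVecFDeriv v e j| ≤ ⨆ j, |e j| := by
  simp only [softmaxVecFDeriv_apply, abs_mul, abs_of_nonneg (softmaxVec_nonneg v _)]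
  exact sum_mul_abs_sub_sum_mul_le (softmaxVec_nonneg v) (sum_softmaxVec_le_one v)
    (fun j => le_ciSup (f := fun j => |e j|) (Set.finite_range _).bddAbove j)
    (Real.iSup_nonneg fun _ => abs_nonneg _)

noncomputable def norm21 (M : Matrix m n ℝ) : ℝ :=
  √(∑ i, (∑ j, |M i j|) ^ 2)

theorem norm21_softmaxFDeriv_le (A E : Matrix m n ℝ) :
    norm21 (softmaxFDeriv A E) ≤ norm2Inf E := by
  unfold norm21 norm2Inf
  gcongr with i
  exact sum_abs_softmaxVecFDeriv_le (A i) (E i)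

theorem normInf2_nonneg (M : Matrix m n ℝ) : 0 ≤ normInf2 M :=
  Real.iSup_nonneg fun _ => sqrt_nonneg _

theorem norm_toLp_eq_sqrt (v : n → ℝ) : ‖WithLp.toLp 2 v‖ = √(∑ j, v j ^ 2) := by
  simp [EuclideanSpace.norm_eq]

theorem frobenius_norm_eq_sqrt_sum_norm_row_sq (A : Matrix m n ℝ) :
    ‖A‖ = √(∑ i, ‖WithLp.toLp 2 (A i)‖ ^ 2) := by
  change ‖WithLp.toLp 2 fun i => WithLp.toLp 2 fun j => A i j‖ = _
  rw [PiLp.norm_eq_of_L2]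

theorem frobNorm_eq_norm (A : Matrix m n ℝ) : frobNorm A = ‖A‖ := by
  simp [frobenius_norm_eq_sqrt_sum_norm_row_sq, EuclideanSpace.real_norm_sq_eq, frobNorm]

theorem norm_mul_le_norm21_mul_normInf2 (A : Matrix l m ℝ) (B : Matrix m n ℝ) :
    ‖A * B‖ ≤ norm21 A * normInf2 B := by
  set K := normInf2 B
  have hK : ∀ j, ‖WithLp.toLp 2 (B j)‖ ≤ K := fun j => by
    rw [norm_toLp_eq_sqrt]
    exact le_ciSup (f := fun j => √(∑ k, B j k ^ 2)) (Set.finite_range _).bddAbove j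
  have hrow : ∀ i, ‖WithLp.toLp 2 ((A * B) i)‖ ≤ (∑ j, |A i j|) * K := fun i => calc
    ‖WithLp.toLp 2 ((A * B) i)‖ = ‖∑ j, A i j • WithLp.toLp 2 (B j)‖ := by
      rw [Matrix.mul_apply_eq_vecMul, Matrix.vecMul_eq_sum, WithLp.toLp_sum]; rfl
    _ ≤ ∑ j, ‖A i j • WithLp.toLp 2 (B j)‖ := norm_sum_le _ _
    _ ≤ ∑ j, |A i j| * K := by
      gcongr with j
      rw [norm_smul, Real.norm_eq_abs]
      exact mul_le_mul_of_nonneg_left (hK j) (abs_nonneg _)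
    _ = (∑ j, |A i j|) * K := (sum_mul ..).symm
  calc ‖A * B‖ = √(∑ i, ‖WithLp.toLp 2 ((A * B) i)‖ ^ 2) :=
        frobenius_norm_eq_sqrt_sum_norm_row_sq _
    _ ≤ √(∑ i, ((∑ j, |A i j|) * K) ^ 2) := by gcongr with i; exact hrow i
    _ = √((∑ i, (∑ j, |A i j|) ^ 2) * K ^ 2) := by simp only [mul_pow, ← sum_mul]
    _ = norm21 A * K := by rw [sqrt_mul' _ (sq_nonneg K), sqrt_sq (normInf2_nonneg B), norm21]

theorem norm_mul_transpose_softmaxFDeriv_le (X : Matrix l n ℝ) (A E : Matrix m n ℝ) :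
    ‖X * (softmaxFDeriv A E)ᵀ‖ ≤ normInf2 Xᵀ * norm2Inf E := calc
  ‖X * (softmaxFDeriv A E)ᵀ‖ = ‖softmaxFDeriv A E * Xᵀ‖ := by
      rw [← Matrix.frobenius_norm_transpose, Matrix.transpose_mul, Matrix.transpose_transpose]
  _ ≤ norm21 (softmaxFDeriv A E) * normInf2 Xᵀ := norm_mul_le_norm21_mul_normInf2 _ _
  _ ≤ norm2Inf E * normInf2 Xᵀ := by
      gcongr
      · exact normInf2_nonneg _
      · exact norm21_softmaxFDeriv_le A E
  _ = normInf2 Xᵀ * norm2Inf E := mul_comm _ _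

end Bounds

theorem attention_derivative_bound_general {d n m : ℕ}
    (g : Matrix (Fin d) (Fin n) ℝ → Matrix (Fin m) (Fin n) ℝ)
    (X : Matrix (Fin d) (Fin n) ℝ)
    (g' : Matrix (Fin d) (Fin n) ℝ →L[ℝ] Matrix (Fin m) (Fin n) ℝ)
    (hg : HasFDerivAt g g' X)
    (C : ℝ)
    (hgC : ∀ H, norm2Inf (g' H) ≤ C * frobNorm H) :
    ∃ Att' : Matrix (Fin d) (Fin n) ℝ →L[ℝ] Matrix (Fin d) (Fin m) ℝ,
      HasFDerivAt (fun Z => Z * (softmaxM (g Z))ᵀ) Att' X ∧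
      ∀ H, frobNorm (Att' H) ≤
        (frobNorm (softmaxM (g X)) + Real.sqrt 2 * normInf2 Xᵀ * C) * frobNorm H := by
  have hS := ((hasFDerivAt_softmaxM (g X)).comp X hg).matrix_transpose
  refine ⟨_, (hasFDerivAt_id X).matrix_mul hS, fun H => ?_⟩
  have hCH : 0 ≤ C * frobNorm H := (sqrt_nonneg _).trans (hgC H)
  simp only [frobNorm_eq_norm] at hgC hCH ⊢
  set S := softmaxM (g X)
  set D := softmaxFDeriv (g X) (g' H)
  change ‖X * Dᵀ + H * Sᵀ‖ ≤ _
  have hXD : ‖X * Dᵀ‖ ≤ normInf2 Xᵀ * (C * ‖H‖) :=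
    (norm_mul_transpose_softmaxFDeriv_le X _ _).trans
      (mul_le_mul_of_nonneg_left (hgC H) (normInf2_nonneg _))
  have hHS : ‖H * Sᵀ‖ ≤ ‖S‖ * ‖H‖ := by
    simpa [mul_comm] using Matrix.frobenius_norm_mul H Sᵀ
  calc ‖X * Dᵀ + H * Sᵀ‖ ≤ ‖X * Dᵀ‖ + ‖H * Sᵀ‖ := norm_add_le _ _
    _ ≤ normInf2 Xᵀ * (C * ‖H‖) + ‖S‖ * ‖H‖ := add_le_add hXD hHS
    _ ≤ (‖S‖ + √2 * normInf2 Xᵀ * C) * ‖H‖ := by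
      nlinarith [one_lt_sqrt_two, mul_nonneg (normInf2_nonneg Xᵀ) hCH]

/-- If `g` is differentiable at `X` with derivative `g'` satisfying
`‖g' H‖_{(2,∞)} ≤ C ‖H‖_F` for all `H`, then `Att X = X ⬝ softmax(g X)ᵀ` is differentiable
at `X` and its derivative satisfies
`‖DAtt_X(H)‖_F ≤ (‖softmax(g X)‖_F + √2 ⬝ ‖Xᵀ‖_{(∞,2)} ⬝ C) ⬝ ‖H‖_F`. -/
theorem attention_derivative_bound {d n m : ℕ}
    (g : Matrix (Fin d) (Fin n) ℝ → Matrix (Fin m) (Fin n) ℝ)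
    (X : Matrix (Fin d) (Fin n) ℝ)
    (g' : Matrix (Fin d) (Fin n) ℝ →L[ℝ] Matrix (Fin m) (Fin n) ℝ)
    (hg : HasFDerivAt g g' X)
    (C : ℝ) (hC : 0 ≤ C)
    (hgC : ∀ H, norm2Inf (g' H) ≤ C * frobNorm H) :
    ∃ Att' : Matrix (Fin d) (Fin n) ℝ →L[ℝ] Matrix (Fin d) (Fin m) ℝ,
      HasFDerivAt (fun Z => Z * (softmaxM (g Z))ᵀ) Att' X ∧
      ∀ H, frobNorm (Att' H) ≤
        (frobNorm (softmaxM (g X)) + Real.sqrt 2 * normInf2 Xᵀ * C) * frobNorm H :=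
  attention_derivative_bound_general g X g' hg C hgC
end

section
/- For Q, K, V ∈ ℝ^{d×n}, set u = ‖Q‖_F, v = ‖Kᵀ‖_{(∞,2)}, w = ‖Vᵀ‖_{(∞,2)}, and assume max{uv, uw, vw} > 0 (i.e. at least two of Q, K, V are nonzero). Define the normalized Transformer score g(Q,K,V) = Qᵀ K / max{uv, uw, vw} ∈ ℝ^{n×n} and the attention map Att(Q,K,V) = V · softmax(g(Q,K,V))ᵀ ∈ ℝ^{d×n}. Then Att is Lipschitz continuous with respect to the Frobenius norm on the concatenated input X = (Q‖K‖V) (so ‖X‖_F² = ‖Q‖_F² + ‖K‖_F² + ‖V‖_F²), with Lipschitz constant at most e^{√3} √(m/n) + 2√6 where m = n (so the constant is e^{√3} + 2√6): for all admissible inputs (Q,K,V) and (Q',K',V'), ‖Att(Q,K,V) − Att(Q',K',V')‖_F ≤ (e^{√3} + 2√6) · √(‖Q−Q'‖_F² + ‖K−K'‖_F² + ‖V−V'‖_F²). -/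
open scoped BigOperators Matrix

/-- The LipschitzNorm-normalized Transformer scaling factor
`max{uv, uw, vw}` with `u = ‖Q‖_F`, `v = ‖Kᵀ‖_{(∞,2)}`, `w = ‖Vᵀ‖_{(∞,2)}`. -/
noncomputable def tDen {d n : ℕ} (Q K V : Matrix (Fin d) (Fin n) ℝ) : ℝ :=
  max (max (frobNorm Q * normInf2 Kᵀ) (frobNorm Q * normInf2 Vᵀ))
    (normInf2 Kᵀ * normInf2 Vᵀ)

/-- The normalized Transformer attention
`Att(Q,K,V) = V ⬝ softmax(Qᵀ K / max{uv, uw, vw})ᵀ`. -/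
noncomputable def tAtt {d n : ℕ} (Q K V : Matrix (Fin d) (Fin n) ℝ) :
    Matrix (Fin d) (Fin n) ℝ :=
  V * (softmaxM ((tDen Q K V)⁻¹ • (Qᵀ * K)))ᵀ

/-!
Change one of `Q`, `K`, `V` at a time. If two score rows differ by at most `δ` entrywise, their
softmax rows agree up to a factor `e^{2δ}`, hence differ by at most `2 tanh δ ≤ 2δ` in `ℓ¹`; so
`‖V (P - P')ᵀ‖_F ≤ 2 ‖Vᵀ‖_{(∞,2)} ‖G - G'‖_{(2,∞)}`. As a function of the argument `x` that
changes, the normaliser `max{uv, uw, vw}` has the form `max (a ‖x‖) b`, where `b` is the product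
of the two fixed norms, and `x ↦ x / max (a ‖x‖) b` is `2 / b`-Lipschitz; the factor `b` cancels
the fixed norms in the bound on the scores. When `V` changes there is also the term
`(V - V') P'ᵀ`: the normalised scores lie in `[-1, 1]`, so softmax entries are at most `e² / n`
and `‖P'‖_F ≤ e`. This gives the constants `4`, `4` and `e + 2`, and
`√(4² + 4² + (e + 2)²) ≤ e^{√3} + 2√6`.
-/

open Finset

theorem Real.sinh_le_mul_cosh {x : ℝ} (hx : 0 ≤ x) : Real.sinh x ≤ x * Real.cosh x := by
  refine hasSum_le (fun k => ?_) (Real.hasSum_sinh x) ((Real.hasSum_cosh x).mul_left x)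
  rw [pow_succ', mul_div_assoc]
  gcongr
  omega

theorem abs_sub_le_mul_add_of_mul_exp_neg_le {p q δ : ℝ} (hp : 0 ≤ p) (hq : 0 ≤ q) (hδ : 0 ≤ δ)
    (hpq : p * Real.exp (-δ) ≤ q * Real.exp δ) (hqp : q * Real.exp (-δ) ≤ p * Real.exp δ) :
    |p - q| ≤ δ * (p + q) := by
  -- `|p - q| ≤ tanh δ · (p + q)`, and `tanh δ ≤ δ`.
  have hcosh := Real.cosh_pos δ
  have hsinh := Real.sinh_le_mul_cosh hδ
  rw [← Real.cosh_sub_sinh, ← Real.cosh_add_sinh] at hpq hqp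
  rw [abs_sub_le_iff]
  constructor <;> nlinarith

section Softmax

variable {ι : Type*} [Fintype ι]

noncomputable def softmax (a : ι → ℝ) (k : ι) : ℝ :=
  Real.exp (a k) / ∑ l, Real.exp (a l)

theorem softmax_nonneg (a : ι → ℝ) (k : ι) : 0 ≤ softmax a k := by
  unfold softmax; positivity

theorem sum_softmax [Nonempty ι] (a : ι → ℝ) : ∑ k, softmax a k = 1 := by
  simp only [softmax]
  rw [← sum_div, div_self]
  exact (sum_pos (fun _ _ => Real.exp_pos _) univ_nonempty).ne'

theorem softmax_mul_exp_neg_le {a b : ι → ℝ} {δ : ℝ} (h : ∀ k, |a k - b k| ≤ δ) (k : ι) :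
    softmax a k * Real.exp (-δ) ≤ softmax b k * Real.exp δ := by
  have hexp : ∀ l, Real.exp (a l) * Real.exp (-δ) ≤ Real.exp (b l) ∧
      Real.exp (b l) ≤ Real.exp (a l) * Real.exp δ := fun l => by
    simp only [← Real.exp_add, Real.exp_le_exp]
    constructor <;> linarith [(abs_le.mp (h l)).1, (abs_le.mp (h l)).2]
  have hsum : (∑ l, Real.exp (b l)) * Real.exp (-δ) ≤ ∑ l, Real.exp (a l) := by
    rw [sum_mul]
    refine sum_le_sum fun l _ => ?_
    calc Real.exp (b l) * Real.exp (-δ) ≤ Real.exp (a l) * Real.exp δ * Real.exp (-δ) := by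
          gcongr; exact (hexp l).2
      _ = Real.exp (a l) := by rw [mul_assoc, ← Real.exp_add]; simp
  have : Nonempty ι := ⟨k⟩
  have hZa : 0 < ∑ l, Real.exp (a l) := sum_pos (fun _ _ => Real.exp_pos _) univ_nonempty
  have hZb : 0 < ∑ l, Real.exp (b l) := sum_pos (fun _ _ => Real.exp_pos _) univ_nonempty
  unfold softmax
  rw [div_mul_eq_mul_div, div_mul_eq_mul_div, div_le_div_iff₀ hZa hZb]
  calc Real.exp (a k) * Real.exp (-δ) * ∑ l, Real.exp (b l)
      ≤ Real.exp (b k) * ∑ l, Real.exp (b l) := by gcongr; exact (hexp k).1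
    _ = Real.exp (b k) * Real.exp δ * ((∑ l, Real.exp (b l)) * Real.exp (-δ)) := by
        rw [mul_mul_mul_comm, ← Real.exp_add]; simp
    _ ≤ Real.exp (b k) * Real.exp δ * ∑ l, Real.exp (a l) := by gcongr

theorem sum_abs_softmax_sub_le (a b : ι → ℝ) :
    ∑ k, |softmax a k - softmax b k| ≤ 2 * ⨆ k, |a k - b k| := by
  rcases isEmpty_or_nonempty ι with hι | hι
  · simp
  set δ := ⨆ k, |a k - b k|
  have h : ∀ k, |a k - b k| ≤ δ := fun k =>
    le_ciSup (f := fun k => |a k - b k|) (Set.finite_range _).bddAbove k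
  have h' : ∀ k, |b k - a k| ≤ δ := fun k => abs_sub_comm (b k) (a k) ▸ h k
  have hδ : 0 ≤ δ := Real.iSup_nonneg fun _ => abs_nonneg _
  calc ∑ k, |softmax a k - softmax b k| ≤ ∑ k, δ * (softmax a k + softmax b k) :=
        sum_le_sum fun k _ => abs_sub_le_mul_add_of_mul_exp_neg_le (softmax_nonneg a k)
          (softmax_nonneg b k) hδ (softmax_mul_exp_neg_le h k) (softmax_mul_exp_neg_le h' k)
    _ = 2 * δ := by rw [← mul_sum, sum_add_distrib, sum_softmax, sum_softmax]; ring

theorem softmax_le_exp_div_card {a : ι → ℝ} {r : ℝ} (h : ∀ k, |a k| ≤ r) (k : ι) :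
    softmax a k ≤ Real.exp (2 * r) / Fintype.card ι := by
  have : Nonempty ι := ⟨k⟩
  have hZ : Fintype.card ι * Real.exp (-r) ≤ ∑ l, Real.exp (a l) := by
    calc (Fintype.card ι : ℝ) * Real.exp (-r) = ∑ _l : ι, Real.exp (-r) := by simp
      _ ≤ ∑ l, Real.exp (a l) :=
        sum_le_sum fun l _ => Real.exp_le_exp.mpr (neg_le_of_abs_le (h l))
  have hcard : (0 : ℝ) < Fintype.card ι := by exact_mod_cast Fintype.card_pos
  calc softmax a k ≤ Real.exp r / (Fintype.card ι * Real.exp (-r)) :=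
        div_le_div₀ (Real.exp_pos r).le (Real.exp_le_exp.mpr (le_of_abs_le (h k)))
          (by positivity) hZ
    _ = Real.exp (2 * r) / Fintype.card ι := by
        rw [Real.exp_neg, two_mul, Real.exp_add]; field_simp

theorem sum_softmax_sq_le {a : ι → ℝ} {r : ℝ} (h : ∀ k, |a k| ≤ r) :
    ∑ k, softmax a k ^ 2 ≤ Real.exp (2 * r) / Fintype.card ι := by
  rcases isEmpty_or_nonempty ι with hι | hι
  · simp
  calc ∑ k, softmax a k ^ 2 ≤ ∑ k, Real.exp (2 * r) / Fintype.card ι * softmax a k :=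
        sum_le_sum fun k _ => by
          rw [sq]
          exact mul_le_mul_of_nonneg_right (softmax_le_exp_div_card h k) (softmax_nonneg a k)
    _ = Real.exp (2 * r) / Fintype.card ι := by rw [← mul_sum, sum_softmax, mul_one]

end Softmax

attribute [local instance] Matrix.frobeniusNormedAddCommGroup Matrix.frobeniusNormedSpace

section Columns

variable {κ ι μ : Type*}

noncomputable def cols : Matrix κ ι ℝ →ₗ[ℝ] (ι → EuclideanSpace ℝ κ) where
  toFun M k := WithLp.toLp 2 fun i => M i k
  map_add' _ _ := rfl
  map_smul' _ _ := rfl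

@[simp]
theorem cols_apply_apply (M : Matrix κ ι ℝ) (k : ι) (i : κ) : cols M k i = M i k := rfl

theorem cols_mul_transpose_apply [Fintype ι] (V : Matrix κ ι ℝ) (P : Matrix μ ι ℝ) (j : μ) :
    cols (V * Pᵀ) j = ∑ k, P j k • cols V k := by
  ext i
  simp [Matrix.mul_apply, mul_comm]

theorem transpose_mul_apply_eq_inner [Fintype κ] (A : Matrix κ μ ℝ) (B : Matrix κ ι ℝ)
    (j : μ) (k : ι) : (Aᵀ * B) j k = inner ℝ (cols A j) (cols B k) := by
  simp [Matrix.mul_apply, PiLp.inner_apply, mul_comm]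

variable [Fintype κ] [Fintype ι]

theorem abs_transpose_mul_apply_le (A : Matrix κ μ ℝ) (B : Matrix κ ι ℝ) (j : μ) (k : ι) :
    |(Aᵀ * B) j k| ≤ ‖cols A j‖ * ‖cols B‖ := by
  rw [transpose_mul_apply_eq_inner]
  exact (abs_real_inner_le_norm _ _).trans (by gcongr; exact norm_le_pi_norm _ k)

theorem frobNorm_eq_norm_s9 (M : Matrix κ ι ℝ) : frobNorm M = ‖M‖ := by
  simp [frobNorm, Matrix.frobenius_norm_def, Real.sqrt_eq_rpow]

theorem norm_sq_eq_sum_norm_cols_sq (M : Matrix κ ι ℝ) : ‖M‖ ^ 2 = ∑ k, ‖cols M k‖ ^ 2 := by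
  rw [← frobNorm_eq_norm_s9, frobNorm, Real.sq_sqrt (by positivity), sum_comm]
  simp [EuclideanSpace.norm_sq_eq]

theorem norm_cols_apply_le (M : Matrix κ ι ℝ) (k : ι) : ‖cols M k‖ ≤ ‖M‖ := by
  refine le_of_pow_le_pow_left₀ two_ne_zero (norm_nonneg _) ?_
  rw [norm_sq_eq_sum_norm_cols_sq]
  exact single_le_sum (f := fun k => ‖cols M k‖ ^ 2) (fun _ _ => sq_nonneg _) (mem_univ k)

theorem norm_cols_le (M : Matrix κ ι ℝ) : ‖cols M‖ ≤ ‖M‖ :=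
  (pi_norm_le_iff_of_nonneg (norm_nonneg M)).mpr (norm_cols_apply_le M)

theorem normInf2_transpose_eq_norm_cols (M : Matrix κ ι ℝ) : normInf2 Mᵀ = ‖cols M‖ := by
  have hcol : ∀ k, √(∑ i, Mᵀ k i ^ 2) = ‖cols M k‖ := fun k => by
    simp [EuclideanSpace.norm_eq]
  simp only [normInf2, hcol]
  refine le_antisymm (Real.iSup_le (norm_le_pi_norm (cols M)) (norm_nonneg _)) ?_
  exact (pi_norm_le_iff_of_nonneg (Real.iSup_nonneg fun _ => norm_nonneg _)).mpr
    fun k => le_ciSup (f := fun k => ‖cols M k‖) (Set.finite_range _).bddAbove k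

theorem norm_le_of_norm_cols_le {M : Matrix κ ι ℝ} {c : ℝ} {δ : ι → ℝ} (hc : 0 ≤ c)
    (h : ∀ k, ‖cols M k‖ ≤ c * δ k) : ‖M‖ ≤ c * √(∑ k, δ k ^ 2) := by
  rw [← Real.sqrt_sq hc, ← Real.sqrt_mul (sq_nonneg c), mul_sum, ← Real.sqrt_sq (norm_nonneg M),
    norm_sq_eq_sum_norm_cols_sq]
  gcongr with k
  rw [← mul_pow]
  exact pow_le_pow_left₀ (norm_nonneg _) (h k) 2

theorem norm2Inf_transpose_mul_le [Fintype μ] (A : Matrix κ μ ℝ) (B : Matrix κ ι ℝ) :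
    norm2Inf (Aᵀ * B) ≤ ‖A‖ * ‖cols B‖ := by
  have hrow : ∀ j, ⨆ k, |(Aᵀ * B) j k| ≤ ‖cols A j‖ * ‖cols B‖ := fun j =>
    Real.iSup_le (abs_transpose_mul_apply_le A B j) (by positivity)
  rw [norm2Inf]
  refine (Real.sqrt_le_sqrt (sum_le_sum fun j _ => pow_le_pow_left₀
    (Real.iSup_nonneg fun _ => abs_nonneg _) (hrow j) 2)).trans ?_
  simp only [mul_pow, ← sum_mul, ← norm_sq_eq_sum_norm_cols_sq]
  rw [Real.sqrt_mul (sq_nonneg _), Real.sqrt_sq (norm_nonneg _), Real.sqrt_sq (norm_nonneg _)]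

end Columns

section Attention

variable {κ ι μ : Type*} [Fintype κ] [Fintype ι] [Fintype μ]

theorem norm_mul_transpose_softmaxM_sub_le (V : Matrix κ ι ℝ) (G G' : Matrix μ ι ℝ) :
    ‖V * (softmaxM G - softmaxM G')ᵀ‖ ≤ 2 * ‖cols V‖ * norm2Inf (G - G') := by
  refine norm_le_of_norm_cols_le (by positivity) fun j => ?_
  rw [cols_mul_transpose_apply]
  calc ‖∑ k, (softmaxM G - softmaxM G') j k • cols V k‖
      ≤ ∑ k, |softmax (G j) k - softmax (G' j) k| * ‖cols V‖ :=
        (norm_sum_le _ _).trans <| sum_le_sum fun k _ => by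
          rw [norm_smul, Real.norm_eq_abs]
          exact mul_le_mul_of_nonneg_left (norm_le_pi_norm _ k) (abs_nonneg _)
    _ ≤ 2 * (⨆ k, |G j k - G' j k|) * ‖cols V‖ := by
        rw [← sum_mul]
        gcongr
        exact sum_abs_softmax_sub_le _ _
    _ = 2 * ‖cols V‖ * ⨆ k, |(G - G') j k| := by simp only [Matrix.sub_apply]; ring

theorem norm_softmaxM_le {G : Matrix μ ι ℝ} {r : ℝ} (h : ∀ j k, |G j k| ≤ r) :
    ‖softmaxM G‖ ≤ Real.exp r * √(Fintype.card μ / Fintype.card ι) := by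
  rw [← Real.sqrt_sq (Real.exp_pos r).le, ← Real.sqrt_mul (sq_nonneg _), ← frobNorm_eq_norm_s9]
  refine Real.sqrt_le_sqrt ?_
  calc ∑ j, ∑ k, softmaxM G j k ^ 2 ≤ ∑ _j : μ, Real.exp (2 * r) / Fintype.card ι :=
        sum_le_sum fun j _ => sum_softmax_sq_le (h j)
    _ = Real.exp r ^ 2 * (Fintype.card μ / Fintype.card ι) := by
        rw [sum_const, card_univ, nsmul_eq_mul, ← Real.exp_nat_mul]; ring_nf

end Attention

theorem mul_mul_abs_inv_max_sub_inv_max_le {a b s s' : ℝ} (ha : 0 ≤ a) (hb : 0 ≤ b)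
    (hs : 0 ≤ s) : b * s * |(max (a * s) b)⁻¹ - (max (a * s') b)⁻¹| ≤ |s - s'| := by
  rcases hb.eq_or_lt with rfl | hb
  · simp
  set D := max (a * s) b
  set D' := max (a * s') b
  have hD : 0 < D := hb.trans_le (le_max_right _ _)
  have hD' : 0 < D' := hb.trans_le (le_max_right _ _)
  have hDD' : |D - D'| ≤ a * |s - s'| := by
    rw [← abs_of_nonneg ha, ← abs_mul, mul_sub]
    exact abs_max_sub_max_le_abs _ _ _
  rw [inv_sub_inv hD.ne' hD'.ne', abs_div, abs_sub_comm, abs_of_pos (mul_pos hD hD'),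
    mul_div_assoc', div_le_iff₀ (mul_pos hD hD')]
  calc b * s * |D - D'| ≤ b * s * (a * |s - s'|) := by gcongr
    _ = b * (a * s) * |s - s'| := by ring
    _ ≤ D' * D * |s - s'| := by gcongr; exacts [le_max_right _ _, le_max_left _ _]
    _ = |s - s'| * (D * D') := by ring

theorem mul_norm_inv_max_smul_sub_le {E : Type*} [NormedAddCommGroup E] [NormedSpace ℝ E]
    {a b : ℝ} (ha : 0 ≤ a) (hb : 0 ≤ b) (x y : E) :
    b * ‖(max (a * ‖x‖) b)⁻¹ • x - (max (a * ‖y‖) b)⁻¹ • y‖ ≤ 2 * ‖x - y‖ := by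
  set D := max (a * ‖x‖) b
  set D' := max (a * ‖y‖) b
  have hbD' : b * D'⁻¹ ≤ 1 := by
    rcases hb.eq_or_lt with rfl | hb
    · simp
    exact mul_inv_le_one_of_le₀ (le_max_right _ _) (hb.le.trans (le_max_right _ _))
  have hsplit : D⁻¹ • x - D'⁻¹ • y = D'⁻¹ • (x - y) + (D⁻¹ - D'⁻¹) • x := by
    rw [smul_sub, sub_smul]; abel
  calc b * ‖D⁻¹ • x - D'⁻¹ • y‖ ≤ b * D'⁻¹ * ‖x - y‖ + b * ‖x‖ * |D⁻¹ - D'⁻¹| := by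
        rw [hsplit]
        refine (mul_le_mul_of_nonneg_left (norm_add_le _ _) hb).trans_eq ?_
        rw [norm_smul, norm_smul, Real.norm_eq_abs, Real.norm_eq_abs,
          abs_of_nonneg (inv_nonneg.mpr (hb.trans (le_max_right _ _)))]
        ring
    _ ≤ 1 * ‖x - y‖ + |‖x‖ - ‖y‖| := by
        gcongr
        exact mul_mul_abs_inv_max_sub_inv_max_le ha hb (norm_nonneg x)
    _ ≤ 2 * ‖x - y‖ := by linarith [abs_norm_sub_norm_le x y]

section Transformer

variable {d n : ℕ}

theorem tDen_eq (Q K V : Matrix (Fin d) (Fin n) ℝ) :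
    tDen Q K V = max (max (‖Q‖ * ‖cols K‖) (‖Q‖ * ‖cols V‖)) (‖cols K‖ * ‖cols V‖) := by
  simp only [tDen, frobNorm_eq_norm_s9, normInf2_transpose_eq_norm_cols]

theorem tDen_eq_max_Q (Q K V : Matrix (Fin d) (Fin n) ℝ) :
    tDen Q K V = max (max ‖cols K‖ ‖cols V‖ * ‖Q‖) (‖cols K‖ * ‖cols V‖) := by
  rw [tDen_eq, max_mul_of_nonneg _ _ (norm_nonneg Q), mul_comm ‖cols K‖ ‖Q‖, mul_comm ‖cols V‖ ‖Q‖]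

theorem tDen_eq_max_K (Q K V : Matrix (Fin d) (Fin n) ℝ) :
    tDen Q K V = max (max ‖Q‖ ‖cols V‖ * ‖cols K‖) (‖Q‖ * ‖cols V‖) := by
  rw [tDen_eq, max_mul_of_nonneg _ _ (norm_nonneg _), mul_comm ‖cols V‖ ‖cols K‖, max_right_comm]

theorem tDen_eq_max_V (Q K V : Matrix (Fin d) (Fin n) ℝ) :
    tDen Q K V = max (max ‖Q‖ ‖cols K‖ * ‖cols V‖) (‖Q‖ * ‖cols K‖) := by
  rw [tDen_eq, max_mul_of_nonneg _ _ (norm_nonneg _), max_assoc, max_comm]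

theorem norm_softmaxM_score_le (Q K V : Matrix (Fin d) (Fin n) ℝ) :
    ‖softmaxM ((tDen Q K V)⁻¹ • (Qᵀ * K))‖ ≤ Real.exp 1 := by
  have hD : 0 ≤ tDen Q K V := by rw [tDen_eq]; positivity
  have hscore : ∀ j k, |((tDen Q K V)⁻¹ • (Qᵀ * K)) j k| ≤ 1 := fun j k => by
    rw [Matrix.smul_apply, smul_eq_mul, abs_mul, abs_inv, abs_of_nonneg hD]
    refine inv_mul_le_one_of_le₀ ((abs_transpose_mul_apply_le Q K j k).trans ?_) hD
    rw [tDen_eq]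
    exact le_max_of_le_left (le_max_of_le_left (by gcongr; exact norm_cols_apply_le Q j))
  refine (norm_softmaxM_le hscore).trans (mul_le_of_le_one_right (Real.exp_pos 1).le ?_)
  exact Real.sqrt_le_one.mpr (div_self_le_one _)

theorem norm_tAtt_sub_tAtt_left_le (Q Q' K V : Matrix (Fin d) (Fin n) ℝ) :
    ‖tAtt Q K V - tAtt Q' K V‖ ≤ 4 * ‖Q - Q'‖ := by
  set D := tDen Q K V with hD
  set D' := tDen Q' K V with hD'
  have hscore : D⁻¹ • (Qᵀ * K) - D'⁻¹ • (Q'ᵀ * K) = (D⁻¹ • Q - D'⁻¹ • Q')ᵀ * K := by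
    rw [Matrix.transpose_sub, Matrix.sub_mul, Matrix.transpose_smul, Matrix.transpose_smul,
      Matrix.smul_mul, Matrix.smul_mul]
  have hnormalize : ‖cols K‖ * ‖cols V‖ * ‖D⁻¹ • Q - D'⁻¹ • Q'‖ ≤ 2 * ‖Q - Q'‖ := by
    rw [hD, hD', tDen_eq_max_Q, tDen_eq_max_Q]
    exact mul_norm_inv_max_smul_sub_le (by positivity) (by positivity) Q Q'
  calc ‖tAtt Q K V - tAtt Q' K V‖
      = ‖V * (softmaxM (D⁻¹ • (Qᵀ * K)) - softmaxM (D'⁻¹ • (Q'ᵀ * K)))ᵀ‖ := by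
        rw [tAtt, tAtt, Matrix.transpose_sub, Matrix.mul_sub]
    _ ≤ 2 * ‖cols V‖ * (‖D⁻¹ • Q - D'⁻¹ • Q'‖ * ‖cols K‖) := by
        refine (norm_mul_transpose_softmaxM_sub_le _ _ _).trans ?_
        rw [hscore]
        gcongr
        exact norm2Inf_transpose_mul_le _ _
    _ ≤ 4 * ‖Q - Q'‖ := by linarith

theorem norm_tAtt_sub_tAtt_middle_le (Q K K' V : Matrix (Fin d) (Fin n) ℝ) :
    ‖tAtt Q K V - tAtt Q K' V‖ ≤ 4 * ‖K - K'‖ := by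
  set D := tDen Q K V with hD
  set D' := tDen Q K' V with hD'
  have hscore : D⁻¹ • (Qᵀ * K) - D'⁻¹ • (Qᵀ * K') = Qᵀ * (D⁻¹ • K - D'⁻¹ • K') := by
    rw [Matrix.mul_sub, Matrix.mul_smul, Matrix.mul_smul]
  have hnormalize :
      ‖Q‖ * ‖cols V‖ * ‖cols (D⁻¹ • K - D'⁻¹ • K')‖ ≤ 2 * ‖K - K'‖ := by
    rw [map_sub, map_smul, map_smul, hD, hD', tDen_eq_max_K, tDen_eq_max_K]
    refine (mul_norm_inv_max_smul_sub_le (by positivity) (by positivity) _ _).trans ?_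
    rw [← map_sub]
    gcongr
    exact norm_cols_le _
  calc ‖tAtt Q K V - tAtt Q K' V‖
      = ‖V * (softmaxM (D⁻¹ • (Qᵀ * K)) - softmaxM (D'⁻¹ • (Qᵀ * K')))ᵀ‖ := by
        rw [tAtt, tAtt, Matrix.transpose_sub, Matrix.mul_sub]
    _ ≤ 2 * ‖cols V‖ * (‖Q‖ * ‖cols (D⁻¹ • K - D'⁻¹ • K')‖) := by
        refine (norm_mul_transpose_softmaxM_sub_le _ _ _).trans ?_
        rw [hscore]
        gcongr
        exact norm2Inf_transpose_mul_le _ _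
    _ ≤ 4 * ‖K - K'‖ := by linarith

theorem norm_tAtt_sub_tAtt_right_le (Q K V V' : Matrix (Fin d) (Fin n) ℝ) :
    ‖tAtt Q K V - tAtt Q K V'‖ ≤ (Real.exp 1 + 2) * ‖V - V'‖ := by
  set D := tDen Q K V with hD
  set D' := tDen Q K V' with hD'
  set P := softmaxM (D⁻¹ • (Qᵀ * K))
  set P' := softmaxM (D'⁻¹ • (Qᵀ * K))
  have hscore : D⁻¹ • (Qᵀ * K) - D'⁻¹ • (Qᵀ * K) = ((D⁻¹ - D'⁻¹) • Q)ᵀ * K := by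
    rw [Matrix.transpose_smul, Matrix.smul_mul, sub_smul]
  have hnormalize : ‖Q‖ * ‖cols K‖ * ‖cols V‖ * |D⁻¹ - D'⁻¹| ≤ ‖V - V'‖ := by
    rw [hD, hD', tDen_eq_max_V, tDen_eq_max_V]
    refine (mul_mul_abs_inv_max_sub_inv_max_le (by positivity) (by positivity)
      (norm_nonneg _)).trans ?_
    exact (abs_norm_sub_norm_le _ _).trans (by rw [← map_sub]; exact norm_cols_le _)
  have hsoftmax : ‖V * (P - P')ᵀ‖ ≤ 2 * ‖V - V'‖ := by
    refine (norm_mul_transpose_softmaxM_sub_le _ _ _).trans ?_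
    rw [hscore]
    grw [norm2Inf_transpose_mul_le, norm_smul, Real.norm_eq_abs]
    linarith
  have hvalues : ‖(V - V') * P'ᵀ‖ ≤ Real.exp 1 * ‖V - V'‖ := by
    grw [Matrix.frobenius_norm_mul, Matrix.frobenius_norm_transpose, norm_softmaxM_score_le]
    rw [mul_comm]
  calc ‖tAtt Q K V - tAtt Q K V'‖ = ‖V * (P - P')ᵀ + (V - V') * P'ᵀ‖ := by
        change ‖V * Pᵀ - V' * P'ᵀ‖ = _
        rw [Matrix.transpose_sub, Matrix.mul_sub, Matrix.sub_mul]
        abel_nf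
    _ ≤ (Real.exp 1 + 2) * ‖V - V'‖ := by grw [norm_add_le, hsoftmax, hvalues]; linarith

end Transformer

theorem sqrt_lipschitz_coeffs_le :
    √(4 ^ 2 + 4 ^ 2 + (Real.exp 1 + 2) ^ 2) ≤ Real.exp (√3) + 2 * √6 := by
  have h3 : 1.7 ≤ √3 := (Real.le_sqrt (by norm_num) (by norm_num)).mpr (by norm_num)
  have h6 : 2.4 ≤ √6 := (Real.le_sqrt (by norm_num) (by norm_num)).mpr (by norm_num)
  have hexp := Real.add_one_le_exp (√3)
  have he := Real.exp_one_lt_d9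
  rw [Real.sqrt_le_iff]
  constructor
  · positivity
  · nlinarith [Real.exp_pos 1]

/-- **LipschitzNorm, Transformer case.** For inputs `(Q,K,V)` with
`max{uv, uw, vw} > 0`, the normalized Transformer attention is Lipschitz continuous with
respect to the Frobenius norm on the concatenated input `(Q‖K‖V)` with constant at most
`e^{√3} √(m/n) + 2√6` where `m = n`, i.e. `e^{√3} + 2√6`. -/
theorem transformer_attention_lipschitz {d n : ℕ} :
    ∀ Q K V Q' K' V' : Matrix (Fin d) (Fin n) ℝ,
      0 < tDen Q K V → 0 < tDen Q' K' V' →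
      frobNorm (tAtt Q K V - tAtt Q' K' V') ≤
        (Real.exp (Real.sqrt 3) + 2 * Real.sqrt 6) *
          Real.sqrt (frobNorm (Q - Q') ^ 2 + frobNorm (K - K') ^ 2 + frobNorm (V - V') ^ 2) := by
  intro Q K V Q' K' V' _ _
  simp only [frobNorm_eq_norm_s9]
  have hcs := Real.sum_mul_le_sqrt_mul_sqrt univ ![4, 4, Real.exp 1 + 2]
    ![‖Q - Q'‖, ‖K - K'‖, ‖V - V'‖]
  simp only [Fin.sum_univ_three, Matrix.cons_val_zero, Matrix.cons_val_one, Matrix.cons_val_two,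
    Matrix.head_cons, Matrix.tail_cons] at hcs
  calc ‖tAtt Q K V - tAtt Q' K' V'‖
      ≤ ‖tAtt Q K V - tAtt Q' K V‖ + ‖tAtt Q' K V - tAtt Q' K' V‖
          + ‖tAtt Q' K' V - tAtt Q' K' V'‖ := by
        linarith [norm_sub_le_norm_sub_add_norm_sub (tAtt Q K V) (tAtt Q' K V) (tAtt Q' K' V'),
          norm_sub_le_norm_sub_add_norm_sub (tAtt Q' K V) (tAtt Q' K' V) (tAtt Q' K' V')]
    _ ≤ 4 * ‖Q - Q'‖ + 4 * ‖K - K'‖ + (Real.exp 1 + 2) * ‖V - V'‖ := by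
        grw [norm_tAtt_sub_tAtt_left_le, norm_tAtt_sub_tAtt_middle_le, norm_tAtt_sub_tAtt_right_le]
    _ ≤ √(4 ^ 2 + 4 ^ 2 + (Real.exp 1 + 2) ^ 2) *
          √(‖Q - Q'‖ ^ 2 + ‖K - K'‖ ^ 2 + ‖V - V'‖ ^ 2) := hcs
    _ ≤ (Real.exp √3 + 2 * √6) * √(‖Q - Q'‖ ^ 2 + ‖K - K'‖ ^ 2 + ‖V - V'‖ ^ 2) := by
        grw [sqrt_lipschitz_coeffs_le]
end
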